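/- Let d ≥ 4 be even and let R = {v ∈ ℤ^d : v₁² + ⋯ + v_d² = 2} be the set of roots of the root lattice D_d (a set of 2d(d−1) vectors). Then R can be partitioned into d − 1 pairwise disjoint 2-frames, i.e., d − 1 sets each of the form {v₁, …, v_d, −v₁, …, −v_d} with ⟨v_i, v_j⟩ = 2·δ_{ij}; hence the maximum number of pairwise disjoint 2-frames in the roots of D_d is d − 1. -/

import Mathlib

/-- A `2`-frame in `ℤ^d`: a set of the form `{v₁, …, v_d, -v₁, …, -v_d}` with
`⟨vᵢ, vⱼ⟩ = 2·δᵢⱼ` (its members are automatically roots, i.e. of squared norm `2`). -/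
def Is2Frame {d : ℕ} (S : Set (Fin d → ℤ)) : Prop :=
  ∃ v : Fin d → (Fin d → ℤ),
    (∀ i j, ∑ t, v i t * v j t = if i = j then 2 else 0) ∧
    S = Set.range v ∪ Set.range fun i => -(v i)

/-!
Think of the coordinates as the vertices of the complete graph `K_d`: a root `±e_a ± e_b` lies
on the edge `{a, b}`. For a perfect matching `σ` of `K_d`, the vectors `e_k ± e_{σ k}`, with the
sign chosen so that the two vectors of each edge are orthogonal, form a 2-frame consisting of all
roots on the edges of `σ`. A 1-factorization of `K_d` therefore partitions the roots into `d - 1`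
frames; for even `d` one is given on `ZMod (d - 1) ∪ {∞}` by matching `∞` with `r` and `x` with
`2 r - x` in colour `r`. Maximality is counting: a 2-frame has exactly `2 d` elements.
-/

open Function Finset

/-- The perfect matchings `σ i` of the complete graph on `α`, as fixed-point-free involutions,
with every edge in exactly one of them. -/
structure IsOneFactorization {ι α : Type*} (σ : ι → α → α) : Prop where
  involutive (i : ι) : Involutive (σ i)
  apply_ne (i : ι) (a : α) : σ i a ≠ a
  apply_injective (a : α) : Injective fun i => σ i a
  exists_apply_eq (a b : α) : a ≠ b → ∃ i, σ i a = b

theorem IsOneFactorization.equiv {ι κ α β : Type*} {σ : ι → α → α} (h : IsOneFactorization σ)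
    (e : β ≃ α) (c : κ ≃ ι) : IsOneFactorization fun k => e.symm ∘ σ (c k) ∘ e where
  involutive k b := by simp [h.involutive _ (e b)]
  apply_ne k b := by simp [Equiv.symm_apply_eq, h.apply_ne]
  apply_injective b k l hkl := c.injective (h.apply_injective (e b) (by simpa using hkl))
  exists_apply_eq a b hab := by
    obtain ⟨i, hi⟩ := h.exists_apply_eq (e a) (e b) (e.injective.ne hab)
    exact ⟨c.symm i, by simp [hi]⟩

namespace ZMod

variable {n : ℕ}

def cyclicMatching (r : ZMod n) : Option (ZMod n) → Option (ZMod n)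
  | none => some r
  | some x => if x = r then none else some (2 * r - x)

theorem isUnit_two_of_odd (hn : Odd n) : IsUnit (2 : ZMod n) := by
  simpa using (ZMod.isUnit_iff_coprime 2 n).2 (Nat.coprime_two_left.2 hn)

theorem isOneFactorization_cyclicMatching (hn : Odd n) :
    IsOneFactorization (cyclicMatching (n := n)) where
  involutive r a := by
    rcases a with _ | x
    · simp [cyclicMatching]
    · by_cases hx : x = r
      · simp [cyclicMatching, hx]
      · have : 2 * r - x ≠ r := fun h => hx (by linear_combination -h)
        simp [cyclicMatching, hx, this]
  apply_ne r a := by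
    rcases a with _ | x
    · simp [cyclicMatching]
    · by_cases hx : x = r
      · simp [cyclicMatching, hx]
      · simp only [cyclicMatching, hx, if_false, ne_eq, Option.some.injEq]
        intro h
        exact hx ((isUnit_two_of_odd hn).mul_right_inj.1 (by linear_combination h)).symm
  apply_injective a r s hrs := by
    rcases a with _ | x
    · simpa [cyclicMatching] using hrs
    · simp only [cyclicMatching] at hrs
      split_ifs at hrs with hr hs hs
      · exact hr.symm.trans hs
      · exact (isUnit_two_of_odd hn).mul_right_inj.1 (by linear_combination Option.some.inj hrs)
  exists_apply_eq a b hab := by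
    obtain ⟨c, hc⟩ := (isUnit_two_of_odd hn).exists_left_inv
    rcases a with _ | x <;> rcases b with _ | y
    · exact absurd rfl hab
    · exact ⟨y, rfl⟩
    · exact ⟨x, by simp [cyclicMatching]⟩
    · refine ⟨c * (x + y), ?_⟩
      have hxy : x ≠ y := fun h => hab (h ▸ rfl)
      have hx : x ≠ c * (x + y) := fun h => hxy (by linear_combination 2 * h + (x + y) * hc)
      simp only [cyclicMatching, hx, if_false, Option.some.injEq]
      linear_combination (x + y) * hc

end ZMod

theorem exists_isOneFactorization_fin {d : ℕ} (hd : Even d) (hd0 : d ≠ 0) :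
    ∃ σ : Fin (d - 1) → Fin d → Fin d, IsOneFactorization σ := by
  have hn : Odd (d - 1) := Nat.Even.sub_odd (by omega) hd odd_one
  have : NeZero (d - 1) := ⟨hn.pos.ne'⟩
  exact ⟨_, (ZMod.isOneFactorization_cyclicMatching hn).equiv
    (Fintype.equivOfCardEq (by simp; omega)) (Fintype.equivOfCardEq (by simp))⟩

section Roots

variable {α : Type*} [Fintype α] {w : α → ℤ}

theorem exists_ne_of_sum_sq_eq_two (hw : ∑ t, w t ^ 2 = 2) :
    ∃ a b, a ≠ b ∧ w a ≠ 0 ∧ w b ≠ 0 := by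
  by_contra! h
  obtain ⟨a, ha⟩ : ∃ a, w a ≠ 0 := by
    by_contra! h0
    simp [h0] at hw
  rw [Finset.sum_eq_single a (fun b _ hba => by simp [h a b hba.symm ha]) (by simp)] at hw
  have := Int.sq_ne_two_mod_four (w a)
  rw [← sq, hw] at this
  exact this rfl

variable [DecidableEq α]

theorem eq_single_add_single_of_sum_sq_eq_two (hw : ∑ t, w t ^ 2 = 2) {a b : α} (hab : a ≠ b)
    (ha : w a ≠ 0) (hb : w b ≠ 0) :
    w a ^ 2 = 1 ∧ w b ^ 2 = 1 ∧ w = Pi.single a (w a) + Pi.single b (w b) := by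
  have hsplit : ∑ t, w t ^ 2 = w a ^ 2 + w b ^ 2 + ∑ t ∈ (univ.erase a).erase b, w t ^ 2 := by
    rw [add_assoc, add_sum_erase _ (fun t => w t ^ 2) (mem_erase.2 ⟨hab.symm, mem_univ b⟩),
      add_sum_erase _ (fun t => w t ^ 2) (mem_univ a)]
  have ha1 : 0 < w a ^ 2 := by positivity
  have hb1 : 0 < w b ^ 2 := by positivity
  have hrest : 0 ≤ ∑ t ∈ (univ.erase a).erase b, w t ^ 2 := sum_nonneg fun t _ => sq_nonneg (w t)
  refine ⟨by omega, by omega, funext fun t => ?_⟩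
  by_cases hta : t = a
  · subst hta; simp [hab]
  by_cases htb : t = b
  · subst htb; simp [hab]
  have : w t ^ 2 ≤ ∑ t ∈ (univ.erase a).erase b, w t ^ 2 :=
    single_le_sum (f := fun t => w t ^ 2) (fun t _ => sq_nonneg (w t)) (by simp [hta, htb])
  simp only [Pi.add_apply, Pi.single_apply, hta, htb, if_false, add_zero]
  exact pow_eq_zero_iff two_ne_zero |>.1 (by linarith [sq_nonneg (w t)])

end Roots

def matchingRoots {α : Type*} [Fintype α] (σ : α → α) : Set (α → ℤ) :=
  {w | ∑ t, w t ^ 2 = 2 ∧ ∃ k, w k ≠ 0 ∧ w (σ k) ≠ 0}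

theorem smul_mem_range_union_range_neg {ι β : Type*} {v : ι → β → ℤ} {c : ℤ} (hc : c ^ 2 = 1)
    (i : ι) : c • v i ∈ Set.range v ∪ Set.range fun i => -v i := by
  rcases sq_eq_one_iff.1 hc with rfl | rfl <;> simp

section Frames

variable {α : Type*} [LinearOrder α] (σ : α → α)

def matchingSign (k : α) : ℤ := if k < σ k then 1 else -1

def matchingFrameVec (k : α) : α → ℤ := Pi.single k 1 + Pi.single (σ k) (matchingSign σ k)

variable {σ}

theorem matchingSign_mul_self (k : α) : matchingSign σ k * matchingSign σ k = 1 := by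
  unfold matchingSign; split_ifs <;> norm_num

theorem matchingSign_apply (hσ : Involutive σ) (hne : ∀ k, σ k ≠ k) (k : α) :
    matchingSign σ (σ k) = -matchingSign σ k := by
  rcases (hne k).lt_or_gt with h | h <;> simp [matchingSign, hσ k, h, h.not_gt]

theorem smul_matchingFrameVec (c : ℤ) (k : α) :
    c • matchingFrameVec σ k = Pi.single k c + Pi.single (σ k) (c * matchingSign σ k) := by
  simp [matchingFrameVec, smul_add, ← Pi.single_smul']

variable [Fintype α]

theorem dotProduct_matchingFrameVec (hσ : Involutive σ) (hne : ∀ k, σ k ≠ k) (i j : α) :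
    matchingFrameVec σ i ⬝ᵥ matchingFrameVec σ j = if i = j then 2 else 0 := by
  simp only [matchingFrameVec, add_dotProduct, single_dotProduct, Pi.add_apply, Pi.single_apply]
  by_cases hij : i = j
  · subst hij
    simp [hne i, (hne i).symm, matchingSign_mul_self]
  by_cases hji : j = σ i
  · subst hji
    simp [hσ i, hij, Ne.symm hij, matchingSign_apply hσ hne]
  · have : i ≠ σ j := fun h => hji (h ▸ (hσ j).symm)
    simp [hij, Ne.symm hji, this, hσ.injective.ne hij]

theorem matchingRoots_eq (hσ : Involutive σ) (hne : ∀ k, σ k ≠ k) :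
    matchingRoots σ =
      Set.range (matchingFrameVec σ) ∪ Set.range fun k => -matchingFrameVec σ k := by
  have hk_ne : ∀ k, k ≠ σ k := fun k => (hne k).symm
  have mem_of_frameVec (k : α) : matchingFrameVec σ k ∈ matchingRoots σ := by
    refine ⟨?_, k, ?_, ?_⟩
    · simpa [sq, dotProduct] using dotProduct_matchingFrameVec hσ hne k k
    · simp [matchingFrameVec, hk_ne]
    · simp [matchingFrameVec, hne, matchingSign]
      split_ifs <;> norm_num
  ext w
  constructor
  · rintro ⟨hw, k, hk, hσk⟩
    obtain ⟨hε, hδ, hw_eq⟩ := eq_single_add_single_of_sum_sq_eq_two hw (hk_ne k) hk hσk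
    rw [hw_eq]
    have hεs : (w k * matchingSign σ k) ^ 2 = 1 := by
      rw [mul_pow, hε, one_mul, sq, matchingSign_mul_self]
    rcases sq_eq_sq_iff_eq_or_eq_neg.1 (hδ.trans hεs.symm) with h | h
    · rw [h, ← smul_matchingFrameVec]
      exact smul_mem_range_union_range_neg hε k
    · have hδs : w (σ k) * matchingSign σ (σ k) = w k := by
        rw [h, matchingSign_apply hσ hne]
        linear_combination w k * matchingSign_mul_self (σ := σ) k
      have hw_smul : Pi.single k (w k) + Pi.single (σ k) (w (σ k)) =
          w (σ k) • matchingFrameVec σ (σ k) := by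
        rw [smul_matchingFrameVec, hσ k, hδs, add_comm]
      rw [hw_smul]
      exact smul_mem_range_union_range_neg hδ (σ k)
  · rintro (⟨k, rfl⟩ | ⟨k, rfl⟩)
    · exact mem_of_frameVec k
    · obtain ⟨hw, j, hj, hσj⟩ := mem_of_frameVec k
      exact ⟨by simpa using hw, j, by simpa using hj, by simpa using hσj⟩

end Frames

theorem is2Frame_matchingRoots {d : ℕ} {σ : Fin d → Fin d} (hσ : Involutive σ)
    (hne : ∀ k, σ k ≠ k) : Is2Frame (matchingRoots σ) :=
  ⟨matchingFrameVec σ, dotProduct_matchingFrameVec hσ hne, matchingRoots_eq hσ hne⟩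

namespace IsOneFactorization

variable {ι α : Type*} [Fintype α] {σ : ι → α → α}

theorem iUnion_matchingRoots (h : IsOneFactorization σ) :
    ⋃ i, matchingRoots (σ i) = {w : α → ℤ | ∑ t, w t ^ 2 = 2} := by
  ext w
  simp only [Set.mem_iUnion, Set.mem_ofPred_eq]
  refine ⟨fun ⟨i, hw, _⟩ => hw, fun hw => ?_⟩
  obtain ⟨a, b, hab, ha, hb⟩ := exists_ne_of_sum_sq_eq_two hw
  obtain ⟨i, rfl⟩ := h.exists_apply_eq a b hab
  exact ⟨i, hw, a, ha, hb⟩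

theorem pairwise_disjoint_matchingRoots [DecidableEq α] (h : IsOneFactorization σ) :
    Pairwise (Disjoint on fun i => matchingRoots (σ i)) := by
  intro i j hij
  rw [Function.onFun, Set.disjoint_left]
  rintro w ⟨hw, k, hk, hik⟩ ⟨-, l, hl, hjl⟩
  obtain ⟨-, -, hw_eq⟩ := eq_single_add_single_of_sum_sq_eq_two hw (h.apply_ne i k).symm hk hik
  have supp (t : α) (ht : w t ≠ 0) : t = k ∨ t = σ i k := by
    by_contra! hne
    have hwt := congrFun hw_eq t
    simp [hne.1, hne.2] at hwt
    exact ht hwt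
  refine hij (h.apply_injective k ?_)
  rcases supp l hl with rfl | rfl <;> rcases supp _ hjl with h1 | h1
  · exact absurd h1 (h.apply_ne j l)
  · exact h1.symm
  · exact (h.involutive j _).symm.trans (congrArg (σ j) h1)
  · exact absurd h1 (h.apply_ne j _)

end IsOneFactorization

section Counting

variable {d : ℕ}

theorem Is2Frame.finite {S : Set (Fin d → ℤ)} (h : Is2Frame S) : S.Finite := by
  obtain ⟨v, -, rfl⟩ := h
  exact (Set.finite_range _).union (Set.finite_range _)

theorem Is2Frame.ncard_eq {S : Set (Fin d → ℤ)} (h : Is2Frame S) : S.ncard = 2 * d := by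
  obtain ⟨v, hv, rfl⟩ := h
  have hv' : ∀ i j, v i ⬝ᵥ v j = if i = j then 2 else 0 := hv
  have hinj : Injective v := fun i j hij => by
    by_contra hne
    have := hv' i j
    rw [if_neg hne, hij, hv' j j, if_pos rfl] at this
    exact two_ne_zero this
  have hdisj : Disjoint (Set.range v) (Set.range fun i => -v i) := by
    rw [Set.disjoint_left]
    rintro _ ⟨i, rfl⟩ ⟨j, hj⟩
    have := hv' j i
    rw [← hj, dotProduct_neg, hv' j j] at this
    split_ifs at this <;> omega
  rw [Set.ncard_union_eq hdisj, Set.ncard_range_of_injective hinj,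
    Set.ncard_range_of_injective (f := fun i => -v i) (neg_injective.comp hinj),
    Nat.card_eq_fintype_card, Fintype.card_fin, two_mul]

theorem ncard_iUnion_of_is2Frame {m : ℕ} {G : Fin m → Set (Fin d → ℤ)}
    (hdisj : Pairwise (Disjoint on G)) (hG : ∀ i, Is2Frame (G i)) :
    (⋃ i, G i).ncard = m * (2 * d) := by
  rw [Set.ncard_iUnion_of_finite (fun i => (hG i).finite) hdisj, finsum_eq_sum_of_fintype]
  simp [(hG _).ncard_eq]

theorem le_of_is2Frame_partition (hd : d ≠ 0) {k m : ℕ} {R : Set (Fin d → ℤ)}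
    {F : Fin k → Set (Fin d → ℤ)} {G : Fin m → Set (Fin d → ℤ)}
    (hFdisj : Pairwise (Disjoint on F)) (hF : ∀ i, Is2Frame (F i)) (hFR : ⋃ i, F i = R)
    (hGdisj : Pairwise (Disjoint on G)) (hG : ∀ i, Is2Frame (G i)) (hGR : ∀ i, G i ⊆ R) :
    m ≤ k := by
  have hR : R.Finite := hFR ▸ Set.finite_iUnion fun i => (hF i).finite
  have hle : m * (2 * d) ≤ k * (2 * d) := by
    rw [← ncard_iUnion_of_is2Frame hGdisj hG, ← ncard_iUnion_of_is2Frame hFdisj hF, hFR]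
    exact Set.ncard_le_ncard (Set.iUnion_subset hGR) hR
  exact Nat.le_of_mul_le_mul_right hle (by omega)

end Counting

theorem stmt10 (d : ℕ) (hd : 4 ≤ d) (hde : Even d) :
    (∃ F : Fin (d - 1) → Set (Fin d → ℤ),
      (∀ i j, i ≠ j → Disjoint (F i) (F j)) ∧
      (⋃ i, F i) = {v : Fin d → ℤ | ∑ t, (v t) ^ 2 = 2} ∧
      ∀ i, Is2Frame (F i)) ∧
    (∀ n : ℕ, ∀ G : Fin n → Set (Fin d → ℤ),
      (∀ i j, i ≠ j → Disjoint (G i) (G j)) →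
      (∀ i, G i ⊆ {v : Fin d → ℤ | ∑ t, (v t) ^ 2 = 2}) →
      (∀ i, Is2Frame (G i)) →
      n ≤ d - 1) := by
  obtain ⟨σ, hσ⟩ := exists_isOneFactorization_fin hde (by omega)
  have hdisj := hσ.pairwise_disjoint_matchingRoots
  have hframes (i : Fin (d - 1)) : Is2Frame (matchingRoots (σ i)) :=
    is2Frame_matchingRoots (hσ.involutive i) (hσ.apply_ne i)
  refine ⟨⟨_, fun i j hij => hdisj hij, hσ.iUnion_matchingRoots, hframes⟩, ?_⟩
  intro n G hGdisj hGroots hG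
  exact le_of_is2Frame_partition (by omega) hdisj hframes hσ.iUnion_matchingRoots
    (fun i j hij => hGdisj i j hij) hG hGroots
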